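/- Let k ∈ {0,…,n} and consider the flex-EA with lower-bound vector l satisfying l_1 > 0, optimizing the trimmed OneMax function TOM_k. Then the expected runtime is at most 1 + 2·l_1^{−1}·n·H_n, where H_n = ∑_{j=1}^n 1/j is the n-th harmonic number; in particular it is O(l_1^{−1}·n·log n). -/

import Mathlib

/-!
Fitness levels. The flex-EA is elitist, so the value of `TOM` at the current solution, a natural
number `v ≤ n`, never decreases. At level `v < n` at least `n - v` single bit flips improve the
fitness, and whatever the archive, rate `1` has frequency at least `l₁`; so each iteration leaves
level `v` with probability at least `q_v = l₁ (n - v) / n`. The potential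
`q_v · ∑_{t<T} Pr[level_t = v] + Pr[level_T ≤ v]` never increases, so the expected time spent at
level `v` is at most `1 / q_v = n / (l₁ (n - v))`, and these sum to `l₁⁻¹ n H_n` over `v < n`.
-/

open scoped ENNReal Classical

namespace FlexEA

/-- Bit strings of length `n`. -/
abbrev Point (n : ℕ) := Fin n → Bool

/-- Flip the bits of `x` at the positions in `S`. -/
def flipSet {n : ℕ} (x : Point n) (S : Finset (Fin n)) : Point n :=
  fun j => if j ∈ S then !(x j) else x j

/-- Flip exactly `r` positions of `x`, chosen uniformly at random
(junk value: no flip, if `r > n`). -/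
noncomputable def flipPMF (n r : ℕ) (x : Point n) : PMF (Point n) :=
  if h : ((Finset.univ : Finset (Fin n)).powersetCard r).Nonempty then
    (PMF.uniformOfFinset _ h).map (flipSet x)
  else PMF.pure x

/-- The PMF given by real weights `w` supported on `s`
(junk value if the weights do not form a probability vector on `s`). -/
noncomputable def pmfOfWeights {α : Type} [Inhabited α] (w : α → ℝ) (s : Finset α) : PMF α :=
  if h : (∑ a ∈ s, ENNReal.ofReal (w a)) = 1 ∧ ∀ a ∉ s, ENNReal.ofReal (w a) = 0 then
    PMF.ofFinset (fun a => ENNReal.ofReal (w a)) s h.1 h.2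
  else PMF.pure default

/-- The water-filling level `c` used to distribute the remaining probability mass
as evenly as possible over the archive `A`, respecting the lower bounds `l`. -/
noncomputable def waterLevel (n : ℕ) (l : ℕ → ℝ) (A : Finset ℕ) : ℝ :=
  sInf {c : ℝ | 0 ≤ c ∧ (∑ i ∈ Finset.Icc 1 n, if i ∈ A then max (l i) c else l i) = 1}

/-- The frequency vector of the flex-EA: `p i = l i` for inactive rates, and the
remaining mass is distributed as evenly as possible over the active rates in `A`,
subject to `p i ≥ l i`. -/
noncomputable def freq (n : ℕ) (l : ℕ → ℝ) (A : Finset ℕ) (i : ℕ) : ℝ :=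
  if i ∈ Finset.Icc 1 n then (if i ∈ A then max (l i) (waterLevel n l A) else l i) else 0

/-- Sampling a rate `r ∈ {1, …, n}` according to the frequency vector. -/
noncomputable def ratePMF (n : ℕ) (l : ℕ → ℝ) (A : Finset ℕ) : PMF ℕ :=
  pmfOfWeights (freq n l A) (Finset.Icc 1 n)

/-- A state of the flex-EA: current solution `x`, archive `arch` of active rates,
failure counters `cnt`, and global counter `glob`. -/
structure State (n : ℕ) where
  x : Point n
  arch : Finset ℕ
  cnt : ℕ → ℕ
  glob : ℕ

/-- The deterministic update of the flex-EA state after sampling rate `r`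
and offspring `y`, when maximizing `f`. -/
noncomputable def updateState (n : ℕ) (f : Point n → ℝ) (l τ : ℕ → ℝ)
    (s : State n) (r : ℕ) (y : Point n) : State n :=
  if f s.x < f y then
    ⟨y, s.arch ∪ {r}, Function.update s.cnt r 0, 0⟩
  else
    let x' := if f y = f s.x then y else s.x
    let u' := s.glob + 1
    let c' := Function.update s.cnt r (s.cnt r + 1)
    let m := if h : s.arch.Nonempty then s.arch.min' h else 1
    if τ m / freq n l s.arch m ≤ (u' : ℝ) then
      ⟨x', {1}, Function.update c' 1 0, 0⟩
    else if τ r ≤ (c' r : ℝ) then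
      if s.arch.erase r = ∅ then
        ⟨x', {if r + 1 ≤ n then r + 1 else 1},
          Function.update c' (if r + 1 ≤ n then r + 1 else 1) 0, u'⟩
      else ⟨x', s.arch.erase r, c', u'⟩
    else ⟨x', s.arch, c', u'⟩

/-- One iteration of the flex-EA maximizing `f`, with lower-bound vector `l`
and count-bound vector `τ`. -/
noncomputable def step (n : ℕ) (f : Point n → ℝ) (l τ : ℕ → ℝ) (s : State n) :
    PMF (State n) :=
  (ratePMF n l s.arch).bind fun r =>
    (flipPMF n r s.x).map fun y => updateState n f l τ s r y

/-- `x` is a global optimum (maximum) of `f`. -/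
def isOpt (n : ℕ) (f : Point n → ℝ) (x : Point n) : Prop := ∀ y, f y ≤ f x

/-- The flex-EA step, made absorbing in the optimal states (used to express
the hitting time via marginal distributions). -/
noncomputable def stepAbs (n : ℕ) (f : Point n → ℝ) (l τ : ℕ → ℝ) (s : State n) :
    PMF (State n) :=
  if isOpt n f s.x then PMF.pure s else step n f l τ s

/-- Initial state: uniformly random solution, archive `{1}`, all counters `0`. -/
noncomputable def initPMF (n : ℕ) : PMF (State n) :=
  (PMF.uniformOfFintype (Point n)).map fun x => ⟨x, {1}, fun _ => 0, 0⟩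

/-- Distribution of the (absorbed) flex-EA state after `t` iterations. -/
noncomputable def stateAt (n : ℕ) (f : Point n → ℝ) (l τ : ℕ → ℝ) : ℕ → PMF (State n)
  | 0 => initPMF n
  | t + 1 => (stateAt n f l τ t).bind (stepAbs n f l τ)

/-- Expected runtime (number of `f`-evaluations until an optimum of `f` is first
evaluated) of the flex-EA on `f`:  `E[1 + T] = 1 + ∑_{t ≥ 0} Pr[T > t]` where `T`
is the hitting time of the optimal states. -/
noncomputable def expectedRuntime (n : ℕ) (f : Point n → ℝ) (l τ : ℕ → ℝ) : ℝ≥0∞ :=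
  1 + ∑' t : ℕ, (stateAt n f l τ t).toOuterMeasure {s | ¬ isOpt n f s.x}

/-- Number of one-bits of `x`. -/
def oneBits {n : ℕ} (x : Point n) : ℕ := (Finset.univ.filter fun i => x i = true).card
/-- Trimmed OneMax: `TOM k x = k + |x|₁` if `|x|₁ ≤ n − k`, and `n − |x|₁` otherwise. -/
noncomputable def TOM (n k : ℕ) (x : Point n) : ℝ :=
  if oneBits x ≤ n - k then (k : ℝ) + oneBits x else (n : ℝ) - oneBits x

end FlexEA

namespace PMF

variable {α : Type*}

theorem toOuterMeasure_add_toOuterMeasure_compl (p : PMF α) (s : Set α) :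
    p.toOuterMeasure s + p.toOuterMeasure sᶜ = 1 := by
  rw [toOuterMeasure_apply, toOuterMeasure_apply, ← ENNReal.tsum_add, ← p.tsum_coe]
  congr 1 with a
  by_cases ha : a ∈ s <;> simp [ha]

theorem toOuterMeasure_le_one (p : PMF α) (s : Set α) : p.toOuterMeasure s ≤ 1 := by
  rw [← p.toOuterMeasure_add_toOuterMeasure_compl s]
  exact le_self_add

theorem toOuterMeasure_bind_add_mul_le (μ : PMF α) (K : α → PMF α) {L V : Set α}
    (hVL : V ⊆ L) {q : ℝ≥0∞}
    (hleave : ∀ a ∈ μ.support, a ∈ V → q ≤ (K a).toOuterMeasure Lᶜ)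
    (hstay : ∀ a ∈ μ.support, a ∉ L → (K a).toOuterMeasure L = 0) :
    (μ.bind K).toOuterMeasure L + q * μ.toOuterMeasure V ≤ μ.toOuterMeasure L := by
  rw [toOuterMeasure_bind_apply, toOuterMeasure_apply μ V, ← ENNReal.tsum_mul_left,
    ← ENNReal.tsum_add, toOuterMeasure_apply μ L]
  refine ENNReal.tsum_le_tsum fun a => ?_
  by_cases hμa : μ a = 0
  · simp [Set.indicator_apply, hμa]
  have ha : a ∈ μ.support := (mem_support_iff μ a).2 hμa
  by_cases haL : a ∈ L
  · rw [Set.indicator_of_mem haL]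
    by_cases haV : a ∈ V
    · have hsum : (K a).toOuterMeasure L + q ≤ 1 := by
        rw [← (K a).toOuterMeasure_add_toOuterMeasure_compl L]
        gcongr
        exact hleave a ha haV
      calc μ a * (K a).toOuterMeasure L + q * V.indicator μ a
          = μ a * ((K a).toOuterMeasure L + q) := by rw [Set.indicator_of_mem haV]; ring
        _ ≤ μ a := mul_le_of_le_one_right' hsum
    · rw [Set.indicator_of_notMem haV, mul_zero, add_zero]
      exact mul_le_of_le_one_right' ((K a).toOuterMeasure_le_one L)
  · rw [Set.indicator_of_notMem haL, Set.indicator_of_notMem (fun h => haL (hVL h)),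
      hstay a ha haL]
    simp

/-- The potential `q * ∑_{t<T} μ_t V + μ_T L` starts at most `1` and does not increase. -/
theorem tsum_toOuterMeasure_le_inv (μ : ℕ → PMF α) (K : α → PMF α)
    (hμ : ∀ t, μ (t + 1) = (μ t).bind K) {L V : Set α} (hVL : V ⊆ L) {q : ℝ≥0∞}
    (hleave : ∀ t, ∀ a ∈ (μ t).support, a ∈ V → q ≤ (K a).toOuterMeasure Lᶜ)
    (hstay : ∀ t, ∀ a ∈ (μ t).support, a ∉ L → (K a).toOuterMeasure L = 0) :
    ∑' t, (μ t).toOuterMeasure V ≤ q⁻¹ := by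
  have hpot : ∀ T, q * ∑ t ∈ Finset.range T, (μ t).toOuterMeasure V
      + (μ T).toOuterMeasure L ≤ 1 := by
    intro T
    induction T with
    | zero => simpa using (μ 0).toOuterMeasure_le_one L
    | succ T ih =>
      calc q * ∑ t ∈ Finset.range (T + 1), (μ t).toOuterMeasure V
            + (μ (T + 1)).toOuterMeasure L
          = q * ∑ t ∈ Finset.range T, (μ t).toOuterMeasure V
            + ((μ (T + 1)).toOuterMeasure L + q * (μ T).toOuterMeasure V) := by
            rw [Finset.sum_range_succ, mul_add]; ring
        _ ≤ q * ∑ t ∈ Finset.range T, (μ t).toOuterMeasure V + (μ T).toOuterMeasure L := by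
            rw [hμ]
            gcongr
            exact toOuterMeasure_bind_add_mul_le _ _ hVL (hleave T) (hstay T)
        _ ≤ 1 := ih
  refine ENNReal.tsum_le_of_sum_range_le fun T => ?_
  rw [ENNReal.le_inv_iff_mul_le, mul_comm]
  exact le_self_add.trans (hpot T)

end PMF

namespace FlexEA

open PMF

section Levels

variable {n : ℕ}

def tomLevel (n k : ℕ) (x : Point n) : ℕ :=
  if oneBits x ≤ n - k then k + oneBits x else n - oneBits x

theorem oneBits_le (x : Point n) : oneBits x ≤ n := by
  simpa [oneBits] using Finset.card_filter_le Finset.univ fun i => x i = true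

theorem TOM_eq_tomLevel (k : ℕ) (x : Point n) : TOM n k x = tomLevel n k x := by
  unfold TOM tomLevel
  split_ifs
  · push_cast; ring
  · push_cast [Nat.cast_sub (oneBits_le x)]; ring

theorem tomLevel_le {k : ℕ} (hk : k ≤ n) (x : Point n) : tomLevel n k x ≤ n := by
  unfold tomLevel
  split_ifs <;> omega

theorem isOpt_TOM_of_tomLevel_eq {k : ℕ} (hk : k ≤ n) {x : Point n} (hx : tomLevel n k x = n) :
    isOpt n (TOM n k) x := fun y => by
  rw [TOM_eq_tomLevel, TOM_eq_tomLevel, hx]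
  exact_mod_cast tomLevel_le hk y

theorem oneBits_flipSet_singleton_of_false {x : Point n} {i : Fin n} (hi : x i = false) :
    oneBits (flipSet x {i}) = oneBits x + 1 := by
  have : (Finset.univ.filter fun j => flipSet x {i} j = true)
      = insert i (Finset.univ.filter fun j => x j = true) := by
    ext j
    by_cases hj : j = i <;> simp [flipSet, hj, hi]
  rw [oneBits, this, Finset.card_insert_of_notMem (by simp [hi]), oneBits]

theorem oneBits_flipSet_singleton_of_true {x : Point n} {i : Fin n} (hi : x i = true) :
    oneBits (flipSet x {i}) + 1 = oneBits x := by
  have : (Finset.univ.filter fun j => flipSet x {i} j = true)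
      = (Finset.univ.filter fun j => x j = true).erase i := by
    ext j
    by_cases hj : j = i <;> simp [flipSet, hj, hi]
  rw [oneBits, this, Finset.card_erase_add_one (by simp [hi]), oneBits]

def improvingBits (n k : ℕ) (x : Point n) : Finset (Fin n) :=
  if oneBits x ≤ n - k then Finset.univ.filter (fun i => x i = false)
  else Finset.univ.filter (fun i => x i = true)

theorem sub_tomLevel_le_card_improvingBits (k : ℕ) (x : Point n) :
    n - tomLevel n k x ≤ (improvingBits n k x).card := by
  have hzeros : (Finset.univ.filter fun i => x i = false).card = n - oneBits x := by
    have := Finset.card_filter_add_card_filter_not (s := Finset.univ) (fun i => x i = true)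
    simp only [Bool.not_eq_true, Finset.card_univ, Fintype.card_fin] at this
    rw [oneBits]
    omega
  unfold improvingBits tomLevel
  split_ifs
  · rw [hzeros]; omega
  · exact Nat.sub_sub_self (oneBits_le x) |>.le

theorem tomLevel_lt_flipSet_of_mem_improvingBits {k : ℕ} {x : Point n}
    (hx : tomLevel n k x < n) {i : Fin n} (hi : i ∈ improvingBits n k x) :
    tomLevel n k x < tomLevel n k (flipSet x {i}) := by
  have := oneBits_le x
  unfold improvingBits at hi
  unfold tomLevel at *
  split_ifs at hi with hc
  · have := oneBits_flipSet_singleton_of_false (by simpa using hi)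
    rw [if_pos hc] at hx ⊢
    split_ifs <;> omega
  · have := oneBits_flipSet_singleton_of_true (by simpa using hi)
    rw [if_neg hc] at hx ⊢
    split_ifs <;> omega

theorem not_isOpt_TOM_of_tomLevel_lt {k : ℕ} {x : Point n} (hx : tomLevel n k x < n) :
    ¬ isOpt n (TOM n k) x := by
  obtain ⟨i, hi⟩ : (improvingBits n k x).Nonempty := by
    rw [← Finset.card_pos]
    exact lt_of_lt_of_le (Nat.sub_pos_of_lt hx) (sub_tomLevel_le_card_improvingBits k x)
  intro hopt
  have := hopt (flipSet x {i})
  rw [TOM_eq_tomLevel, TOM_eq_tomLevel] at this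
  exact absurd (tomLevel_lt_flipSet_of_mem_improvingBits hx hi) (not_lt.2 (by exact_mod_cast this))

end Levels

section Rates

variable {n : ℕ} {l : ℕ → ℝ} {A : Finset ℕ}

theorem waterLevel_spec (hl0 : ∀ i, 0 ≤ l i) (hlsum : ∑ i ∈ Finset.Icc 1 n, l i ≤ 1)
    {i₀ : ℕ} (hi₀A : i₀ ∈ A) (hi₀ : i₀ ∈ Finset.Icc 1 n) :
    0 ≤ waterLevel n l A ∧
      (∑ i ∈ Finset.Icc 1 n, if i ∈ A then max (l i) (waterLevel n l A) else l i) = 1 := by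
  set g : ℝ → ℝ := fun c => ∑ i ∈ Finset.Icc 1 n, if i ∈ A then max (l i) c else l i
  have hg : Continuous g := by
    refine continuous_finsetSum _ fun i _ => ?_
    split_ifs
    · exact continuous_const.max continuous_id
    · exact continuous_const
  have hg0 : g 0 ≤ 1 := by
    refine le_of_eq_of_le (Finset.sum_congr rfl fun i _ => ?_) hlsum
    split_ifs
    · exact max_eq_left (hl0 i)
    · rfl
  have hg1 : 1 ≤ g 1 := by
    have hterm : ∀ i ∈ Finset.Icc 1 n, 0 ≤ if i ∈ A then max (l i) (1 : ℝ) else l i :=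
      fun i _ => by split_ifs <;> simp [hl0 i]
    calc (1 : ℝ) ≤ max (l i₀) 1 := le_max_right _ _
      _ = if i₀ ∈ A then max (l i₀) 1 else l i₀ := (if_pos hi₀A).symm
      _ ≤ g 1 := Finset.single_le_sum hterm hi₀
  obtain ⟨c, hc, hgc⟩ := intermediate_value_Icc zero_le_one hg.continuousOn ⟨hg0, hg1⟩
  have hclosed : IsClosed {c : ℝ | 0 ≤ c ∧ g c = 1} :=
    isClosed_Ici.inter (isClosed_singleton.preimage hg)
  exact hclosed.csInf_mem ⟨c, hc.1, hgc⟩ ⟨0, fun _ h => h.1⟩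

theorem ratePMF_apply (hl0 : ∀ i, 0 ≤ l i) (hlsum : ∑ i ∈ Finset.Icc 1 n, l i ≤ 1)
    {i₀ : ℕ} (hi₀A : i₀ ∈ A) (hi₀ : i₀ ∈ Finset.Icc 1 n) (r : ℕ) :
    ratePMF n l A r = ENNReal.ofReal (freq n l A r) := by
  obtain ⟨hc, hsum⟩ := waterLevel_spec hl0 hlsum hi₀A hi₀
  have hfreq : ∀ i, 0 ≤ freq n l A i := fun i => by
    unfold freq
    split_ifs
    exacts [hc.trans (le_max_right _ _), hl0 i, le_rfl]
  have hone : ∑ i ∈ Finset.Icc 1 n, ENNReal.ofReal (freq n l A i) = 1 := by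
    rw [← ENNReal.ofReal_sum_of_nonneg fun i _ => hfreq i, ← ENNReal.ofReal_one, ← hsum]
    exact congrArg _ (Finset.sum_congr rfl fun i hi => if_pos hi)
  have hout : ∀ i ∉ Finset.Icc 1 n, ENNReal.ofReal (freq n l A i) = 0 := fun i hi => by
    rw [freq, if_neg hi, ENNReal.ofReal_zero]
  rw [ratePMF, pmfOfWeights, dif_pos ⟨hone, hout⟩, PMF.ofFinset_apply]

theorem mem_Icc_of_mem_support_ratePMF (hl0 : ∀ i, 0 ≤ l i)
    (hlsum : ∑ i ∈ Finset.Icc 1 n, l i ≤ 1) {i₀ : ℕ} (hi₀A : i₀ ∈ A)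
    (hi₀ : i₀ ∈ Finset.Icc 1 n) {r : ℕ} (hr : r ∈ (ratePMF n l A).support) :
    r ∈ Finset.Icc 1 n := by
  rw [mem_support_iff, ratePMF_apply hl0 hlsum hi₀A hi₀] at hr
  by_contra hrn
  exact hr (by rw [freq, if_neg hrn, ENNReal.ofReal_zero])

theorem le_freq_one (hn : 1 ≤ n) (A : Finset ℕ) : l 1 ≤ freq n l A 1 := by
  rw [freq, if_pos (Finset.mem_Icc.2 ⟨le_rfl, hn⟩)]
  split_ifs
  exacts [le_max_left _ _, le_rfl]

end Rates

section Archive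

variable {n : ℕ} {f : Point n → ℝ} {l τ : ℕ → ℝ}

/-- The invariant of the archive under which the frequency vector is a probability vector. -/
def ArchiveValid (n : ℕ) (s : State n) : Prop :=
  s.arch.Nonempty ∧ s.arch ⊆ Finset.Icc 1 n

theorem updateState_x_of_lt {s : State n} {r : ℕ} {y : Point n} (h : f s.x < f y) :
    (updateState n f l τ s r y).x = y := by
  rw [updateState, if_pos h]

theorem le_updateState_x (s : State n) (r : ℕ) (y : Point n) :
    f s.x ≤ f (updateState n f l τ s r y).x := by
  unfold updateState
  dsimp only
  split_ifs <;> linarith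

theorem ArchiveValid.updateState (hn : 1 ≤ n) {s : State n} (hs : ArchiveValid n s) {r : ℕ}
    (hr : r ∈ Finset.Icc 1 n) (y : Point n) :
    ArchiveValid n (updateState n f l τ s r y) := by
  obtain ⟨hne, hsub⟩ := hs
  rw [Finset.mem_Icc] at hr
  unfold FlexEA.updateState ArchiveValid
  dsimp only
  split_ifs
  · exact ⟨by simp, Finset.union_subset hsub (by simpa using hr)⟩
  all_goals
    first
    | exact ⟨hne, hsub⟩
    | exact ⟨Finset.nonempty_iff_ne_empty.2 ‹_›, (Finset.erase_subset _ _).trans hsub⟩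
    | exact ⟨by simp, by simp; omega⟩

theorem mem_support_stepAbs {s s' : State n} (h : s' ∈ (stepAbs n f l τ s).support) :
    s' = s ∨ ∃ r ∈ (ratePMF n l s.arch).support, ∃ y, s' = updateState n f l τ s r y := by
  unfold stepAbs at h
  split_ifs at h
  · exact Or.inl (by simpa using h)
  · right
    simp only [step, support_bind, support_map, Set.mem_iUnion, Set.mem_image] at h
    obtain ⟨r, hr, y, -, rfl⟩ := h
    exact ⟨r, hr, y, rfl⟩

theorem le_x_of_mem_support_stepAbs {s s' : State n} (h : s' ∈ (stepAbs n f l τ s).support) :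
    f s.x ≤ f s'.x := by
  obtain rfl | ⟨r, -, y, rfl⟩ := mem_support_stepAbs h
  exacts [le_rfl, le_updateState_x s r y]

theorem ArchiveValid.of_mem_support_stepAbs (hn : 1 ≤ n) (hl0 : ∀ i, 0 ≤ l i)
    (hlsum : ∑ i ∈ Finset.Icc 1 n, l i ≤ 1) {s s' : State n} (hs : ArchiveValid n s)
    (h : s' ∈ (stepAbs n f l τ s).support) : ArchiveValid n s' := by
  obtain rfl | ⟨r, hr, y, rfl⟩ := mem_support_stepAbs h
  · exact hs
  · obtain ⟨i₀, hi₀⟩ := hs.1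
    exact hs.updateState hn (mem_Icc_of_mem_support_ratePMF hl0 hlsum hi₀ (hs.2 hi₀) hr) y

theorem archiveValid_of_mem_support_stateAt (hn : 1 ≤ n) (hl0 : ∀ i, 0 ≤ l i)
    (hlsum : ∑ i ∈ Finset.Icc 1 n, l i ≤ 1) (t : ℕ) {s : State n}
    (hs : s ∈ (stateAt n f l τ t).support) : ArchiveValid n s := by
  induction t generalizing s with
  | zero =>
    simp only [stateAt, initPMF, support_map, Set.mem_image] at hs
    obtain ⟨x, -, rfl⟩ := hs
    exact ⟨by simp, by simpa using hn⟩
  | succ t ih =>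
    simp only [stateAt, support_bind, Set.mem_iUnion] at hs
    obtain ⟨s₀, hs₀, hs⟩ := hs
    exact (ih hs₀).of_mem_support_stepAbs hn hl0 hlsum hs

end Archive

section Runtime

open MeasureTheory

variable {n k : ℕ} {l τ : ℕ → ℝ}

theorem card_div_le_flipPMF_one_toOuterMeasure (x : Point n) (S : Finset (Fin n))
    {E : Set (Point n)} (hS : ∀ i ∈ S, flipSet x {i} ∈ E) :
    (S.card : ℝ≥0∞) / n ≤ (flipPMF n 1 x).toOuterMeasure E := by
  rcases S.eq_empty_or_nonempty with rfl | ⟨i₀, -⟩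
  · simp
  have hpow : (Finset.univ.powersetCard 1 : Finset (Finset (Fin n))).Nonempty :=
    Finset.powersetCard_nonempty.2 (Finset.card_pos.2 ⟨i₀, Finset.mem_univ _⟩)
  rw [flipPMF, dif_pos hpow, toOuterMeasure_map_apply, toOuterMeasure_uniformOfFinset_apply,
    Finset.card_powersetCard, Finset.card_univ, Fintype.card_fin, Nat.choose_one_right]
  refine ENNReal.div_le_div_right (Nat.cast_le.2 ?_) _
  rw [← Finset.card_image_of_injective S Finset.singleton_injective]
  refine Finset.card_le_card fun T hT => ?_
  obtain ⟨i, hi, rfl⟩ := Finset.mem_image.1 hT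
  simpa using hS i hi

/-- At fitness level `v < n`, rate `1` is drawn with probability at least `l 1`, and then one of
the at least `n - v` improving bits is flipped with probability at least `(n - v) / n`. -/
theorem ofReal_le_step_toOuterMeasure_tomLevel_lt (hn : 1 ≤ n) (hl0 : ∀ i, 0 ≤ l i)
    (hlsum : ∑ i ∈ Finset.Icc 1 n, l i ≤ 1) {s : State n} (hs : ArchiveValid n s)
    (hlt : tomLevel n k s.x < n) :
    ENNReal.ofReal (l 1 * (n - tomLevel n k s.x : ℕ) / n) ≤
      (step n (TOM n k) l τ s).toOuterMeasure {s' | tomLevel n k s.x < tomLevel n k s'.x} := by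
  obtain ⟨i₀, hi₀⟩ := hs.1
  have hrate : ENNReal.ofReal (l 1) ≤ ratePMF n l s.arch 1 := by
    rw [ratePMF_apply hl0 hlsum hi₀ (hs.2 hi₀)]
    exact ENNReal.ofReal_le_ofReal (le_freq_one hn _)
  have hflip : ((n - tomLevel n k s.x : ℕ) : ℝ≥0∞) / n ≤ (flipPMF n 1 s.x).toOuterMeasure
      (updateState n (TOM n k) l τ s 1 ⁻¹' {s' | tomLevel n k s.x < tomLevel n k s'.x}) := by
    refine le_trans ?_ (card_div_le_flipPMF_one_toOuterMeasure s.x (improvingBits n k s.x)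
      fun i hi => ?_)
    · gcongr
      exact sub_tomLevel_le_card_improvingBits k s.x
    · have hup := tomLevel_lt_flipSet_of_mem_improvingBits hlt hi
      have hTOM : TOM n k s.x < TOM n k (flipSet s.x {i}) := by
        rw [TOM_eq_tomLevel, TOM_eq_tomLevel]
        exact_mod_cast hup
      simpa [updateState_x_of_lt hTOM] using hup
  rw [step, toOuterMeasure_bind_apply]
  refine le_trans ?_ (ENNReal.le_tsum 1)
  rw [toOuterMeasure_map_apply, mul_div_assoc, ENNReal.ofReal_mul (hl0 1),
    ENNReal.ofReal_div_of_pos (by exact_mod_cast hn), ENNReal.ofReal_natCast,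
    ENNReal.ofReal_natCast]
  exact mul_le_mul' hrate hflip

theorem tsum_stateAt_tomLevel_eq_le (hn : 1 ≤ n) (hl0 : ∀ i, 0 ≤ l i)
    (hlsum : ∑ i ∈ Finset.Icc 1 n, l i ≤ 1) (hl1 : 0 < l 1) {v : ℕ} (hv : v < n) :
    ∑' t, (stateAt n (TOM n k) l τ t).toOuterMeasure {s | tomLevel n k s.x = v}
      ≤ ENNReal.ofReal ((l 1)⁻¹ * n / (n - v : ℕ)) := by
  have hnv : 0 < n - v := Nat.sub_pos_of_lt hv
  have hq : (l 1)⁻¹ * n / (n - v : ℕ) = (l 1 * (n - v : ℕ) / n)⁻¹ := by field_simp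
  rw [hq, ENNReal.ofReal_inv_of_pos (by positivity)]
  refine tsum_toOuterMeasure_le_inv _ _ (fun t => rfl)
    (L := {s | tomLevel n k s.x ≤ v}) (fun s hs => le_of_eq hs) ?_ ?_
  · rintro t s hs rfl
    rw [stepAbs, if_neg (not_isOpt_TOM_of_tomLevel_lt hv)]
    refine (ofReal_le_step_toOuterMeasure_tomLevel_lt hn hl0 hlsum
      (archiveValid_of_mem_support_stateAt hn hl0 hlsum t hs) hv).trans
      (measure_mono fun s' hs' => ?_)
    simpa using hs'
  · refine fun t s _ hs => (toOuterMeasure_apply_eq_zero_iff _ _).2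
      (Set.disjoint_left.2 fun s' hs' hs'v => hs ?_)
    have hle := le_x_of_mem_support_stepAbs hs'
    rw [TOM_eq_tomLevel, TOM_eq_tomLevel, Nat.cast_le] at hle
    exact hle.trans hs'v

theorem toOuterMeasure_not_isOpt_TOM_le (hk : k ≤ n) (μ : PMF (State n)) :
    μ.toOuterMeasure {s | ¬ isOpt n (TOM n k) s.x}
      ≤ ∑ v ∈ Finset.range n, μ.toOuterMeasure {s | tomLevel n k s.x = v} := by
  refine (measure_mono fun s hs => ?_).trans (measure_biUnion_finset_le _ _)
  have hlt : tomLevel n k s.x < n := (tomLevel_le hk s.x).lt_of_ne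
    fun h => hs (isOpt_TOM_of_tomLevel_eq hk h)
  simpa using hlt

theorem sum_range_div_sub_eq (n : ℕ) (c : ℝ) :
    ∑ v ∈ Finset.range n, c / (n - v : ℕ) = c * ∑ j ∈ Finset.Icc 1 n, (j : ℝ)⁻¹ := by
  rw [Finset.mul_sum]
  refine Finset.sum_nbij' (n - ·) (n - ·) ?_ ?_ ?_ ?_ fun v _ => div_eq_mul_inv _ _ <;>
    intro v hv <;> simp only [Finset.mem_range, Finset.mem_Icc] at hv ⊢ <;> omega

end Runtime

theorem flexEA_trimmedOneMax_general (n k : ℕ) (hn : 1 ≤ n) (hk : k ≤ n)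
    (l τ : ℕ → ℝ) (hl0 : ∀ i, 0 ≤ l i) (hlsum : ∑ i ∈ Finset.Icc 1 n, l i ≤ 1)
    (hl1 : 0 < l 1) :
    expectedRuntime n (TOM n k) l τ ≤
      ENNReal.ofReal (1 + 2 * (l 1)⁻¹ * n * ∑ j ∈ Finset.Icc 1 n, (j : ℝ)⁻¹) := by
  set H := ∑ j ∈ Finset.Icc 1 n, (j : ℝ)⁻¹
  have hH : 0 ≤ H := Finset.sum_nonneg fun j _ => by positivity
  calc expectedRuntime n (TOM n k) l τ
      ≤ 1 + ∑' t, ∑ v ∈ Finset.range n,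
          (stateAt n (TOM n k) l τ t).toOuterMeasure {s | tomLevel n k s.x = v} := by
        rw [expectedRuntime]
        gcongr
        exact toOuterMeasure_not_isOpt_TOM_le hk _
    _ = 1 + ∑ v ∈ Finset.range n,
          ∑' t, (stateAt n (TOM n k) l τ t).toOuterMeasure {s | tomLevel n k s.x = v} := by
        rw [Summable.tsum_finsetSum fun _ _ => ENNReal.summable]
    _ ≤ 1 + ∑ v ∈ Finset.range n, ENNReal.ofReal ((l 1)⁻¹ * n / (n - v : ℕ)) := by
        gcongr with v hv
        exact tsum_stateAt_tomLevel_eq_le hn hl0 hlsum hl1 (Finset.mem_range.1 hv)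
    _ = ENNReal.ofReal (1 + (l 1)⁻¹ * n * H) := by
        rw [← ENNReal.ofReal_sum_of_nonneg fun v _ => by positivity, sum_range_div_sub_eq,
          ENNReal.ofReal_add zero_le_one (by positivity), ENNReal.ofReal_one]
    _ ≤ ENNReal.ofReal (1 + 2 * (l 1)⁻¹ * n * H) := by
        gcongr
        linarith [inv_pos.2 hl1]

/-- The flex-EA with `l 1 > 0` optimizes trimmed OneMax in expected
time at most `1 + 2 l₁⁻¹ n H_n`, where `H_n` is the `n`-th harmonic number. -/
theorem flexEA_trimmedOneMax (n k : ℕ) (hn : 1 ≤ n) (hk : k ≤ n)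
    (l τ : ℕ → ℝ) (hl0 : ∀ i, 0 ≤ l i) (hlsum : ∑ i ∈ Finset.Icc 1 n, l i ≤ 1)
    (hτ0 : ∀ i, 0 ≤ τ i) (hl1 : 0 < l 1) :
    expectedRuntime n (TOM n k) l τ ≤
      ENNReal.ofReal (1 + 2 * (l 1)⁻¹ * n * ∑ j ∈ Finset.Icc 1 n, (j : ℝ)⁻¹) :=
  flexEA_trimmedOneMax_general n k hn hk l τ hl0 hlsum hl1

end FlexEA
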